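/- For every finite connected weighted vertex-transitive graph G with common degree w and edge weights ≥ 1, the second smallest eigenvalue of the normalized Laplacian satisfies λ₂ ≥ 1/(2·w·diam²), where diam is the graph diameter. -/

import Mathlib

/-!
For `f` orthogonal to the constants, `f ⬝ᵥ L f = ∑ W a b (f a - f b)² / (2w)` and
`∑ x, ∑ y, (f x - f y)² = 2n ‖f‖²`, so by min-max it suffices to prove the Poincaré inequality
`∑ x, ∑ y, (f x - f y)² ≤ n D² ∑_{a ~ b} (f a - f b)²`; this even gives `λ₂ ≥ 1/(w D²)`.
Along a shortest path from `x` to `y`, Cauchy–Schwarz bounds `(f x - f y)²` by `D` times the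
sum of the squared increments along the path. Averaging this over a finite group of automorphisms
that acts transitively moves every edge of the path uniformly over the graph: each increment at an
edge leaving `v` is at most the local energy at `v`, and the local energy at `g • v`, averaged
over `g`, is `1/n` of the total energy.
-/

/-- The normalized Laplacian `I - A/w` of a weighted graph with common degree `wd`. -/
noncomputable def normLapT {n : ℕ} (W : Matrix (Fin n) (Fin n) ℝ) (wd : ℝ) :
    Matrix (Fin n) (Fin n) ℝ :=
  Matrix.of fun x y => (if x = y then (1 : ℝ) else 0) - W x y / wd

open Finset Matrix

theorem MulAction.card_smul_sum_smul {Γ V M : Type*} [Group Γ] [Fintype Γ] [MulAction Γ V]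
    [MulAction.IsPretransitive Γ V] [Fintype V] [AddCommMonoid M] (H : V → M) (a : V) :
    Fintype.card V • ∑ g : Γ, H (g • a) = Fintype.card Γ • ∑ c, H c := by
  have hconst : ∀ b, ∑ g : Γ, H (g • b) = ∑ g : Γ, H (g • a) := by
    intro b
    obtain ⟨h, rfl⟩ := MulAction.exists_smul_eq Γ a b
    simpa [mul_smul] using Equiv.sum_comp (Equiv.mulRight h) fun g => H (g • a)
  calc Fintype.card V • ∑ g : Γ, H (g • a) = ∑ b, ∑ g : Γ, H (g • b) := by
        simp [hconst]
    _ = ∑ g : Γ, ∑ c, H c := by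
        rw [sum_comm]
        exact sum_congr rfl fun g _ => Equiv.sum_comp (MulAction.toPerm g) H
    _ = Fintype.card Γ • ∑ c, H c := by simp

theorem SimpleGraph.Walk.sub_sq_le_length_mul_sum {V : Type*} {G : SimpleGraph V} {x y : V}
    (p : G.Walk x y) (f : V → ℝ) :
    (f x - f y) ^ 2 ≤
      p.length * ∑ i ∈ range p.length, (f (p.getVert i) - f (p.getVert (i + 1))) ^ 2 := by
  have htel : f x - f y = ∑ i ∈ range p.length, (f (p.getVert i) - f (p.getVert (i + 1))) := by
    rw [sum_range_sub' (fun i => f (p.getVert i)), p.getVert_zero, p.getVert_length]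
  rw [htel]
  simpa using sq_sum_le_card_mul_sum_sq (s := range p.length)
    (f := fun i => f (p.getVert i) - f (p.getVert (i + 1)))

namespace SimpleGraph

variable {V Γ : Type*} [Fintype V] {G : SimpleGraph V} [DecidableRel G.Adj]
  [Group Γ] [Fintype Γ] [MulAction Γ V] [MulAction.IsPretransitive Γ V]

theorem sub_sq_le_sum_neighborFinset {u v : V} (h : G.Adj u v) (f : V → ℝ) :
    (f u - f v) ^ 2 ≤ ∑ b ∈ G.neighborFinset u, (f u - f b) ^ 2 :=
  single_le_sum (fun b _ => sq_nonneg (f u - f b)) ((G.mem_neighborFinset u v).2 h)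

theorem Walk.card_mul_sum_sub_sq_smul_le
    (hΓ : ∀ (g : Γ) {a b : V}, G.Adj a b → G.Adj (g • a) (g • b)) (f : V → ℝ) {x y : V}
    (p : G.Walk x y) :
    Fintype.card V * ∑ g : Γ, (f (g • x) - f (g • y)) ^ 2 ≤
      p.length ^ 2 * Fintype.card Γ * ∑ a, ∑ b ∈ G.neighborFinset a, (f a - f b) ^ 2 := by
  set H : V → ℝ := fun c => ∑ b ∈ G.neighborFinset c, (f c - f b) ^ 2
  have hstep : ∀ g : Γ, (f (g • x) - f (g • y)) ^ 2 ≤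
      p.length * ∑ i ∈ range p.length, H (g • p.getVert i) := fun g =>
    (p.sub_sq_le_length_mul_sum fun v => f (g • v)).trans <|
      mul_le_mul_of_nonneg_left (sum_le_sum fun i hi => sub_sq_le_sum_neighborFinset
        (hΓ g (p.adj_getVert_succ (mem_range.1 hi))) f) (Nat.cast_nonneg _)
  have havg : ∀ v, Fintype.card V * ∑ g : Γ, H (g • v) = Fintype.card Γ * ∑ c, H c := by
    intro v
    simpa only [nsmul_eq_mul] using MulAction.card_smul_sum_smul (Γ := Γ) H v
  calc Fintype.card V * ∑ g : Γ, (f (g • x) - f (g • y)) ^ 2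
      ≤ Fintype.card V * ∑ g : Γ, p.length * ∑ i ∈ range p.length, H (g • p.getVert i) :=
        mul_le_mul_of_nonneg_left (sum_le_sum fun g _ => hstep g) (Nat.cast_nonneg _)
    _ = p.length * ∑ i ∈ range p.length, Fintype.card V * ∑ g : Γ, H (g • p.getVert i) := by
        rw [← mul_sum, sum_comm, mul_sum, mul_sum, mul_sum]
        refine sum_congr rfl fun i _ => ?_
        ring
    _ = p.length ^ 2 * Fintype.card Γ * ∑ c, H c := by
        simp only [havg, sum_const, card_range, nsmul_eq_mul]
        ring

theorem Connected.sum_sum_sub_sq_le (hG : G.Connected)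
    (hΓ : ∀ (g : Γ) {a b : V}, G.Adj a b → G.Adj (g • a) (g • b)) {D : ℕ}
    (hD : ∀ x y, G.dist x y ≤ D) (f : V → ℝ) :
    ∑ x, ∑ y, (f x - f y) ^ 2 ≤
      Fintype.card V * D ^ 2 * ∑ a, ∑ b ∈ G.neighborFinset a, (f a - f b) ^ 2 := by
  set E := ∑ a, ∑ b ∈ G.neighborFinset a, (f a - f b) ^ 2
  have : Nonempty V := hG.nonempty
  have hpair : ∀ x y, Fintype.card V * ∑ g : Γ, (f (g • x) - f (g • y)) ^ 2 ≤
      D ^ 2 * Fintype.card Γ * E := by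
    intro x y
    obtain ⟨p, hp⟩ := hG.exists_walk_length_eq_dist x y
    refine (p.card_mul_sum_sub_sq_smul_le hΓ f).trans ?_
    have hE : 0 ≤ E := sum_nonneg fun a _ => sum_nonneg fun b _ => sq_nonneg _
    gcongr
    exact_mod_cast hp ▸ hD x y
  have hinv : ∑ g : Γ, ∑ x, ∑ y, (f (g • x) - f (g • y)) ^ 2 =
      Fintype.card Γ * ∑ x, ∑ y, (f x - f y) ^ 2 := by
    rw [← nsmul_eq_mul, ← card_univ, ← sum_const]
    refine sum_congr rfl fun g _ => ?_
    exact Fintype.sum_equiv (MulAction.toPerm g) _ _ fun x =>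
      Fintype.sum_equiv (MulAction.toPerm g) _ _ fun y => rfl
  have hV : (0 : ℝ) < Fintype.card V * Fintype.card Γ := by positivity
  refine le_of_mul_le_mul_left ?_ hV
  calc Fintype.card V * Fintype.card Γ * ∑ x, ∑ y, (f x - f y) ^ 2
      = ∑ x, ∑ y, Fintype.card V * ∑ g : Γ, (f (g • x) - f (g • y)) ^ 2 := by
        rw [mul_assoc, ← hinv]
        simp only [mul_sum]
        rw [sum_comm]
        exact sum_congr rfl fun x _ => sum_comm
    _ ≤ ∑ x : V, ∑ y : V, D ^ 2 * Fintype.card Γ * E :=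
        sum_le_sum fun x _ => sum_le_sum fun y _ => hpair x y
    _ = Fintype.card V * Fintype.card Γ * (Fintype.card V * D ^ 2 * E) := by
        simp only [sum_const, card_univ, nsmul_eq_mul]
        ring

end SimpleGraph

theorem sum_sum_sub_sq {ι : Type*} [Fintype ι] (f : ι → ℝ) :
    ∑ x, ∑ y, (f x - f y) ^ 2 = 2 * Fintype.card ι * ∑ x, f x ^ 2 - 2 * (∑ x, f x) ^ 2 := by
  simp only [sub_sq, sum_add_distrib, sum_sub_distrib, sum_const, card_univ, nsmul_eq_mul,
    ← mul_sum, ← sum_mul, mul_assoc]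
  ring

theorem Matrix.le_of_orthonormal_eigenvectors {ι : Type*} [Fintype ι] {M : Matrix ι ι ℝ}
    {v₀ v₁ : ι → ℝ} {μ₀ μ₁ c : ℝ} (h₀ : M *ᵥ v₀ = μ₀ • v₀) (h₁ : M *ᵥ v₁ = μ₁ • v₁)
    (h₀₀ : v₀ ⬝ᵥ v₀ = 1) (h₁₁ : v₁ ⬝ᵥ v₁ = 1) (h₀₁ : v₀ ⬝ᵥ v₁ = 0) (hμ : μ₀ ≤ μ₁)
    (u : ι → ℝ) (hc : ∀ f, u ⬝ᵥ f = 0 → c * (f ⬝ᵥ f) ≤ f ⬝ᵥ M *ᵥ f) : c ≤ μ₁ := by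
  have h₁₀ : v₁ ⬝ᵥ v₀ = 0 := by rw [dotProduct_comm, h₀₁]
  -- two vectors and one linear constraint: some nontrivial combination is orthogonal to `u`
  obtain ⟨α, β, hαβ, hu⟩ : ∃ α β : ℝ, 0 < α ^ 2 + β ^ 2 ∧ u ⬝ᵥ (α • v₀ + β • v₁) = 0 := by
    by_cases h : u ⬝ᵥ v₀ = 0 ∧ u ⬝ᵥ v₁ = 0
    · exact ⟨1, 0, by norm_num, by simp [h.1]⟩
    · refine ⟨u ⬝ᵥ v₁, -(u ⬝ᵥ v₀), ?_, ?_⟩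
      · rw [neg_sq]
        rcases not_and_or.1 h with h | h <;> positivity
      · simp only [dotProduct_add, dotProduct_smul, smul_eq_mul]
        ring
  have hnorm : (α • v₀ + β • v₁) ⬝ᵥ (α • v₀ + β • v₁) = α ^ 2 + β ^ 2 := by
    simp only [dotProduct_add, add_dotProduct, dotProduct_smul, smul_dotProduct, smul_eq_mul,
      h₀₀, h₁₁, h₀₁, h₁₀]
    ring
  have hquad : (α • v₀ + β • v₁) ⬝ᵥ M *ᵥ (α • v₀ + β • v₁) = α ^ 2 * μ₀ + β ^ 2 * μ₁ := by
    simp only [mulVec_add, mulVec_smul, h₀, h₁, dotProduct_add, add_dotProduct, dotProduct_smul,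
      smul_dotProduct, smul_eq_mul, h₀₀, h₁₁, h₀₁, h₁₀]
    ring
  have := hc _ hu
  rw [hnorm, hquad] at this
  nlinarith [mul_le_mul_of_nonneg_left hμ (sq_nonneg α)]

theorem Matrix.IsHermitian.le_eigenvalue_of_forall_orthogonal {ι : Type*} [Fintype ι]
    [DecidableEq ι] {M : Matrix ι ι ℝ} (hM : M.IsHermitian) {i j : ι} (hij : i ≠ j)
    (hle : hM.eigenvalues i ≤ hM.eigenvalues j) (u : ι → ℝ) {c : ℝ}
    (hc : ∀ f, u ⬝ᵥ f = 0 → c * (f ⬝ᵥ f) ≤ f ⬝ᵥ M *ᵥ f) : c ≤ hM.eigenvalues j := by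
  have hdot : ∀ k l, ⇑(hM.eigenvectorBasis k) ⬝ᵥ ⇑(hM.eigenvectorBasis l) =
      if k = l then 1 else 0 := by
    intro k l
    have := orthonormal_iff_ite.1 hM.eigenvectorBasis.orthonormal l k
    rw [EuclideanSpace.inner_eq_star_dotProduct] at this
    simpa [eq_comm] using this
  exact le_of_orthonormal_eigenvectors (hM.mulVec_eigenvectorBasis i)
    (hM.mulVec_eigenvectorBasis j) (by simp [hdot]) (by simp [hdot]) (by simp [hdot, hij]) hle u hc

section WeightedGraph

variable {V : Type*} {W : Matrix V V ℝ}

def weightAutGroup (W : Matrix V V ℝ) : Subgroup (Equiv.Perm V) where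
  carrier := {e | ∀ a b, W (e a) (e b) = W a b}
  one_mem' _ _ := rfl
  mul_mem' he he' a b := (he _ _).trans (he' a b)
  inv_mem' {e} he a b := by simpa using (he (e⁻¹ a) (e⁻¹ b)).symm

theorem weightAutGroup.isPretransitive
    (htrans : ∀ x y : V, ∃ e : Equiv.Perm V, e x = y ∧ ∀ a b, W (e a) (e b) = W a b) :
    MulAction.IsPretransitive (weightAutGroup W) V where
  exists_smul_eq x y := by
    obtain ⟨e, hxy, he⟩ := htrans x y
    exact ⟨⟨e, he⟩, hxy⟩

theorem weightAutGroup.adj_smul (g : weightAutGroup W) {a b : V}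
    (h : (SimpleGraph.fromRel fun x y => W x y ≠ 0).Adj a b) :
    (SimpleGraph.fromRel fun x y => W x y ≠ 0).Adj (g • a) (g • b) := by
  simpa [SimpleGraph.fromRel_adj, Subgroup.smul_def, g.2 a b, g.2 b a] using h

theorem one_le_of_adj_fromRel (hsym : ∀ x y, W x y = W y x) (hW1 : ∀ x y, W x y = 0 ∨ 1 ≤ W x y)
    {a b : V} (h : (SimpleGraph.fromRel fun x y => W x y ≠ 0).Adj a b) : 1 ≤ W a b := by
  have : W a b ≠ 0 := by
    rw [SimpleGraph.fromRel_adj, hsym b a, or_self] at h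
    exact h.2
  exact (hW1 a b).resolve_left this

theorem one_le_sum_of_reachable [Fintype V] (hsym : ∀ x y, W x y = W y x)
    (hnn : ∀ x y, 0 ≤ W x y) (hW1 : ∀ x y, W x y = 0 ∨ 1 ≤ W x y) {x y : V} (hxy : x ≠ y)
    (h : (SimpleGraph.fromRel fun x y => W x y ≠ 0).Reachable x y) : 1 ≤ ∑ z, W x z := by
  obtain ⟨z, hz⟩ := h.nonempty_neighborSet_left hxy
  exact (one_le_of_adj_fromRel hsym hW1 hz).trans
    (single_le_sum (fun z _ => hnn x z) (mem_univ z))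

theorem sum_neighborFinset_sub_sq_le [Fintype V] {G : SimpleGraph V} [DecidableRel G.Adj]
    (hnn : ∀ x y, 0 ≤ W x y) (hG : ∀ a b, G.Adj a b → 1 ≤ W a b) (f : V → ℝ) :
    ∑ a, ∑ b ∈ G.neighborFinset a, (f a - f b) ^ 2 ≤ ∑ a, ∑ b, W a b * (f a - f b) ^ 2 := by
  refine sum_le_sum fun a _ => ?_
  calc ∑ b ∈ G.neighborFinset a, (f a - f b) ^ 2
      ≤ ∑ b ∈ G.neighborFinset a, W a b * (f a - f b) ^ 2 :=
        sum_le_sum fun b hb => le_mul_of_one_le_left (sq_nonneg _)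
          (hG a b ((G.mem_neighborFinset a b).1 hb))
    _ ≤ ∑ b, W a b * (f a - f b) ^ 2 :=
        sum_le_univ_sum_of_nonneg fun b => mul_nonneg (hnn a b) (sq_nonneg _)

end WeightedGraph

theorem dotProduct_normLapT_mulVec {n : ℕ} {W : Matrix (Fin n) (Fin n) ℝ}
    (hsym : ∀ x y, W x y = W y x) {wd : ℝ} (hwd : wd ≠ 0) (hdeg : ∀ x, ∑ z, W x z = wd)
    (f : Fin n → ℝ) :
    f ⬝ᵥ normLapT W wd *ᵥ f = (∑ a, ∑ b, W a b * (f a - f b) ^ 2) / (2 * wd) := by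
  have hcol : ∀ b, ∑ a, W a b = wd := fun b => by simp only [hsym _ b, hdeg]
  have hmul : ∀ a, (normLapT W wd *ᵥ f) a = f a - (∑ b, W a b * f b) / wd := by
    intro a
    simp [normLapT, mulVec, dotProduct, sub_mul, ite_mul, sum_sub_distrib, sum_div,
      div_mul_eq_mul_div]
  have henergy : ∑ a, ∑ b, W a b * (f a - f b) ^ 2 =
      2 * wd * ∑ a, f a ^ 2 - 2 * ∑ a, f a * ∑ b, W a b * f b := by
    have hsq : ∑ a, ∑ b, W a b * f b ^ 2 = wd * ∑ b, f b ^ 2 := by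
      rw [sum_comm, mul_sum]
      simp only [← sum_mul, hcol]
    have hexp : ∀ a b, W a b * (f a - f b) ^ 2 =
        W a b * f a ^ 2 + W a b * f b ^ 2 - 2 * (f a * (W a b * f b)) := fun a b => by ring
    simp only [hexp, sum_add_distrib, sum_sub_distrib, hsq, ← sum_mul, hdeg, ← mul_sum]
    ring
  rw [henergy, dotProduct]
  simp only [hmul, mul_sub, sum_sub_distrib, ← sum_div, mul_div_assoc']
  field_simp

theorem dotProduct_le_mul_dotProduct_normLapT_mulVec {n : ℕ} {W : Matrix (Fin n) (Fin n) ℝ}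
    (hsym : ∀ x y, W x y = W y x) (hnn : ∀ x y, 0 ≤ W x y)
    (hW1 : ∀ x y, W x y = 0 ∨ 1 ≤ W x y)
    (hconn : (SimpleGraph.fromRel fun x y => W x y ≠ 0).Connected)
    (htrans : ∀ x y : Fin n, ∃ e : Equiv.Perm (Fin n),
      e x = y ∧ ∀ a b, W (e a) (e b) = W a b)
    {wd : ℝ} (hwd : 0 < wd) (hdeg : ∀ x, ∑ z, W x z = wd)
    {D : ℕ} (hD : ∀ s t : Fin n, (SimpleGraph.fromRel fun x y => W x y ≠ 0).dist s t ≤ D)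
    (f : Fin n → ℝ) (hf : ∑ x, f x = 0) :
    f ⬝ᵥ f ≤ wd * D ^ 2 * (f ⬝ᵥ normLapT W wd *ᵥ f) := by
  classical
  have := weightAutGroup.isPretransitive htrans
  have := Fintype.ofFinite (weightAutGroup W)
  have hpoincare := hconn.sum_sum_sub_sq_le (Γ := weightAutGroup W)
    (fun g _ _ h => weightAutGroup.adj_smul g h) hD f
  have henergy := sum_neighborFinset_sub_sq_le hnn
    (fun _ _ h => one_le_of_adj_fromRel hsym hW1 h) f
  have hn : (0 : ℝ) < n := by exact_mod_cast hconn.nonempty.elim fun x => x.pos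
  rw [sum_sum_sub_sq, hf, Fintype.card_fin] at hpoincare
  rw [dotProduct_normLapT_mulVec hsym hwd.ne' hdeg, dotProduct]
  simp only [← sq]
  rw [mul_div_assoc', le_div_iff₀ (by positivity)]
  nlinarith [mul_le_mul_of_nonneg_left henergy (by positivity : (0 : ℝ) ≤ n * D ^ 2)]

/-- For every finite connected weighted vertex-transitive graph with common degree `wd`
and edge weights `≥ 1`, one has `λ₂ ≥ 1/(2·wd·diam²)`. -/
theorem stmt18 {n : ℕ} (hn : 2 ≤ n) (W : Matrix (Fin n) (Fin n) ℝ)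
    (hsym : ∀ x y, W x y = W y x) (hnn : ∀ x y, 0 ≤ W x y)
    (hW1 : ∀ x y, W x y = 0 ∨ 1 ≤ W x y)
    (hconn : (SimpleGraph.fromRel fun x y => W x y ≠ 0).Connected)
    (htrans : ∀ x y : Fin n, ∃ e : Equiv.Perm (Fin n),
      e x = y ∧ ∀ a b, W (e a) (e b) = W a b)
    (wd : ℝ) (hdeg : ∀ x, (∑ z, W x z) = wd)
    (hL : (normLapT W wd).IsHermitian)
    (lam : Fin n → ℝ) (hmono : Monotone lam)
    (hperm : ∃ σ : Equiv.Perm (Fin n), lam = hL.eigenvalues ∘ σ)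
    (D : ℕ) (hD : ∀ s t : Fin n, (SimpleGraph.fromRel fun x y => W x y ≠ 0).dist s t ≤ D) :
    1 / (2 * wd * (D : ℝ) ^ 2) ≤ lam ⟨1, by omega⟩ := by
  obtain ⟨σ, rfl⟩ := hperm
  have h01 : (⟨0, by omega⟩ : Fin n) ≠ ⟨1, by omega⟩ := by simp [Fin.ext_iff]
  have hwd : 0 < wd := hdeg ⟨0, by omega⟩ ▸
    one_pos.trans_le (one_le_sum_of_reachable hsym hnn hW1 h01 (hconn.preconnected _ _))
  have hDpos : (0 : ℝ) < D := by
    exact_mod_cast (hconn.pos_dist_of_ne h01).trans_le (hD _ _)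
  have hgap := hL.le_eigenvalue_of_forall_orthogonal (σ.injective.ne h01)
    (hmono (Fin.mk_le_mk.2 zero_le_one)) 1 (c := 1 / (wd * D ^ 2)) fun f hf => by
      rw [one_dotProduct] at hf
      rw [one_div_mul_eq_div, div_le_iff₀' (by positivity)]
      exact dotProduct_le_mul_dotProduct_normLapT_mulVec hsym hnn hW1 hconn htrans hwd hdeg hD f hf
  refine le_trans ?_ hgap
  gcongr
  linarith
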